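/- arXiv:2105.08439 — 4 statements merged into one kernel-verified Lean document; each statement's English description precedes it below -/
import Mathlib

section
/- Let l > 0 and let u : ℝ → ℂ be twice continuously differentiable on [0, l] with u(0) = 0 and u(l) = 0. Then ∫₀ˡ |u′(x)|² dx ≤ (l²/2) · ∫₀ˡ |u″(x)|² dx. -/
/-!
Write `v = u'`. Since `u(0) = u(l)`, Rolle's theorem gives, for each coordinate `g` of `v` in an
orthonormal basis, a point `ζ` with `g ζ = 0`. The fundamental theorem of calculus and
Cauchy–Schwarz then give `g(x)² ≤ |x - ζ| ∫₀ˡ g'²`, and `∫₀ˡ |x - ζ| dx ≤ l² / 2`.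
Summing over the coordinates gives the bound for `‖v‖²`.
-/

open MeasureTheory Set intervalIntegral

theorem sq_integral_le_sub_mul_integral_sq {a b : ℝ} {f : ℝ → ℝ} (hab : a ≤ b)
    (hf : IntervalIntegrable f volume a b)
    (hf2 : IntervalIntegrable (fun x => f x ^ 2) volume a b) :
    (∫ x in a..b, f x) ^ 2 ≤ (b - a) * ∫ x in a..b, f x ^ 2 := by
  set I := ∫ x in a..b, f x
  set m := b - a
  -- expanding `0 ≤ ∫ (m f - I)²` gives `0 ≤ m (m ∫ f² - I²)`
  have hexpand : ∫ x in a..b, (m * f x - I) ^ 2 = m * (m * ∫ x in a..b, f x ^ 2) - m * I ^ 2 := by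
    have hpoint : ∀ x, (m * f x - I) ^ 2 = m ^ 2 * f x ^ 2 - 2 * m * I * f x + I ^ 2 := by
      intro x; ring
    simp only [hpoint]
    rw [integral_add ((hf2.const_mul _).sub (hf.const_mul _)) intervalIntegrable_const,
      integral_sub (hf2.const_mul _) (hf.const_mul _), intervalIntegral.integral_const_mul,
      intervalIntegral.integral_const_mul, intervalIntegral.integral_const, smul_eq_mul]
    ring
  have hnonneg : 0 ≤ ∫ x in a..b, (m * f x - I) ^ 2 :=
    integral_nonneg hab fun x _ => sq_nonneg _
  rcases hab.eq_or_lt with rfl | hlt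
  · simp [I]
  · nlinarith [sub_pos.2 hlt]

section NormedSpace

variable {E : Type*} [NormedAddCommGroup E] [NormedSpace ℝ E]

theorem exists_mem_Ioo_clm_apply_eq_zero {a b : ℝ} {u u' : ℝ → E} (L : E →L[ℝ] ℝ) (hab : a < b)
    (hu : ∀ x ∈ Icc a b, HasDerivWithinAt u (u' x) (Icc a b) x) (huab : u a = u b) :
    ∃ ζ ∈ Ioo a b, L (u' ζ) = 0 :=
  exists_hasDerivAt_eq_zero hab
    (L.continuous.comp_continuousOn fun x hx => (hu x hx).continuousWithinAt) (by simp [huab])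
    fun x hx => L.hasFDerivAt.comp_hasDerivAt x
      ((hu x (Ioo_subset_Icc_self hx)).hasDerivAt (Icc_mem_nhds hx.1 hx.2))

variable [CompleteSpace E]

theorem sq_norm_sub_le_sub_mul_integral_sq_norm {a b : ℝ} {g g' : ℝ → E} (hab : a ≤ b)
    (hg : ∀ x ∈ Icc a b, HasDerivWithinAt g (g' x) (Icc a b) x)
    (hg' : ContinuousOn g' (Icc a b)) :
    ‖g b - g a‖ ^ 2 ≤ (b - a) * ∫ x in a..b, ‖g' x‖ ^ 2 := by
  have hg'int : IntervalIntegrable g' volume a b := hg'.intervalIntegrable_of_Icc hab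
  have hftc : ∫ x in a..b, g' x = g b - g a :=
    integral_eq_sub_of_hasDerivAt_of_le hab
      (fun x hx => (hg x hx).continuousWithinAt)
      (fun x hx => (hg x (Ioo_subset_Icc_self hx)).hasDerivAt (Icc_mem_nhds hx.1 hx.2))
      hg'int
  calc ‖g b - g a‖ ^ 2 ≤ (∫ x in a..b, ‖g' x‖) ^ 2 := by
        rw [← hftc]
        exact pow_le_pow_left₀ (norm_nonneg _) (intervalIntegral.norm_integral_le_integral_norm hab) 2
    _ ≤ (b - a) * ∫ x in a..b, ‖g' x‖ ^ 2 :=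
        sq_integral_le_sub_mul_integral_sq hab hg'int.norm
          ((hg'.norm.pow 2).intervalIntegrable_of_Icc hab)

theorem sq_norm_le_abs_sub_mul_integral_sq_norm {a b ζ x : ℝ} {g g' : ℝ → E}
    (hζ : ζ ∈ Icc a b) (hx : x ∈ Icc a b) (hgζ : g ζ = 0)
    (hg : ∀ x ∈ Icc a b, HasDerivWithinAt g (g' x) (Icc a b) x)
    (hg' : ContinuousOn g' (Icc a b)) :
    ‖g x‖ ^ 2 ≤ |x - ζ| * ∫ t in a..b, ‖g' t‖ ^ 2 := by
  have hsub : ∀ c d, a ≤ c → c ≤ d → d ≤ b →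
      ‖g d - g c‖ ^ 2 ≤ (d - c) * ∫ t in a..b, ‖g' t‖ ^ 2 := by
    intro c d hac hcd hdb
    have hIcc : Icc c d ⊆ Icc a b := Icc_subset_Icc hac hdb
    calc ‖g d - g c‖ ^ 2 ≤ (d - c) * ∫ t in c..d, ‖g' t‖ ^ 2 :=
          sq_norm_sub_le_sub_mul_integral_sq_norm hcd
            (fun t ht => (hg t (hIcc ht)).mono hIcc) (hg'.mono hIcc)
      _ ≤ (d - c) * ∫ t in a..b, ‖g' t‖ ^ 2 :=
          mul_le_mul_of_nonneg_left
            (integral_mono_interval hac hcd hdb (.of_forall fun t => by positivity)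
              ((hg'.norm.pow 2).intervalIntegrable_of_Icc (hac.trans (hcd.trans hdb))))
            (sub_nonneg.2 hcd)
  rcases le_total ζ x with hζx | hxζ
  · simpa [hgζ, abs_of_nonneg (sub_nonneg.2 hζx)] using hsub ζ x hζ.1 hζx hx.2
  · simpa [hgζ, abs_of_nonpos (sub_nonpos.2 hxζ)] using hsub x ζ hx.1 hxζ hζ.2

theorem integral_abs_sub_le {a b ζ : ℝ} (hζ : ζ ∈ Icc a b) :
    ∫ x in a..b, |x - ζ| ≤ (b - a) ^ 2 / 2 := by
  have hcont : Continuous fun x : ℝ => |x - ζ| := by fun_prop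
  have hleft : ∫ x in a..ζ, |x - ζ| = ∫ x in a..ζ, (ζ - x) :=
    integral_congr fun x hx => by
      rw [uIcc_of_le hζ.1] at hx
      simp [abs_of_nonpos (sub_nonpos.2 hx.2)]
  have hright : ∫ x in ζ..b, |x - ζ| = ∫ x in ζ..b, (x - ζ) :=
    integral_congr fun x hx => by
      rw [uIcc_of_le hζ.2] at hx
      simp [abs_of_nonneg (sub_nonneg.2 hx.1)]
  rw [← integral_add_adjacent_intervals (hcont.intervalIntegrable a ζ)
    (hcont.intervalIntegrable ζ b), hleft, hright,
    integral_sub intervalIntegrable_const intervalIntegrable_id,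
    integral_sub intervalIntegrable_id intervalIntegrable_const]
  simp only [intervalIntegral.integral_const, smul_eq_mul, integral_id]
  nlinarith [hζ.1, hζ.2]

theorem integral_sq_norm_le_of_eq_zero {a b ζ : ℝ} {g g' : ℝ → E} (hab : a ≤ b)
    (hζ : ζ ∈ Icc a b) (hgζ : g ζ = 0)
    (hg : ∀ x ∈ Icc a b, HasDerivWithinAt g (g' x) (Icc a b) x)
    (hg' : ContinuousOn g' (Icc a b)) :
    ∫ x in a..b, ‖g x‖ ^ 2 ≤ (b - a) ^ 2 / 2 * ∫ x in a..b, ‖g' x‖ ^ 2 := by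
  set A := ∫ x in a..b, ‖g' x‖ ^ 2
  have hA : 0 ≤ A := integral_nonneg hab fun x _ => by positivity
  have hgc : ContinuousOn g (Icc a b) := fun x hx => (hg x hx).continuousWithinAt
  calc ∫ x in a..b, ‖g x‖ ^ 2 ≤ ∫ x in a..b, |x - ζ| * A :=
        integral_mono_on hab ((hgc.norm.pow 2).intervalIntegrable_of_Icc hab)
          ((by fun_prop : Continuous fun x : ℝ => |x - ζ| * A).intervalIntegrable _ _)
          fun x hx => sq_norm_le_abs_sub_mul_integral_sq_norm hζ hx hgζ hg hg'
    _ = (∫ x in a..b, |x - ζ|) * A := integral_mul_const _ _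
    _ ≤ (b - a) ^ 2 / 2 * A := mul_le_mul_of_nonneg_right (integral_abs_sub_le hζ) hA

end NormedSpace

open scoped RealInnerProductSpace

section InnerProductSpace

variable {F : Type*} [NormedAddCommGroup F] [InnerProductSpace ℝ F]

theorem OrthonormalBasis.integral_sq_norm_eq_sum {ι : Type*} [Fintype ι]
    (e : OrthonormalBasis ι ℝ F) {f : ℝ → F} {a b : ℝ} (hf : ContinuousOn f (uIcc a b)) :
    ∫ x in a..b, ‖f x‖ ^ 2 = ∑ i, ∫ x in a..b, ⟪e i, f x⟫ ^ 2 := by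
  simp_rw [← e.sum_sq_inner_right]
  exact integral_finsetSum fun i _ =>
    ((continuousOn_const.inner hf).pow 2).intervalIntegrable

theorem integral_sq_norm_derivWithin_le [FiniteDimensional ℝ F] {u : ℝ → F} {a b : ℝ}
    (hab : a < b) (hu : ContDiffOn ℝ 2 u (Icc a b)) (huab : u a = u b) :
    ∫ x in a..b, ‖derivWithin u (Icc a b) x‖ ^ 2
      ≤ (b - a) ^ 2 / 2 * ∫ x in a..b, ‖iteratedDerivWithin 2 u (Icc a b) x‖ ^ 2 := by
  set s := Icc a b
  have hs : UniqueDiffOn ℝ s := uniqueDiffOn_Icc hab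
  have hu₁ : ContDiffOn ℝ 1 (derivWithin u s) s := hu.derivWithin hs (by norm_num)
  have hu' : ∀ x ∈ s, HasDerivWithinAt u (derivWithin u s x) s x := fun x hx =>
    (hu.differentiableOn (by norm_num) x hx).hasDerivWithinAt
  have hu'' : ∀ x ∈ s, HasDerivWithinAt (derivWithin u s) (iteratedDerivWithin 2 u s x) s x :=
    fun x hx => by
      rw [iteratedDerivWithin_eq_iterate]
      exact (hu₁.differentiableOn one_ne_zero x hx).hasDerivWithinAt
  have hcont' : ContinuousOn (derivWithin u s) (uIcc a b) := by
    rw [uIcc_of_le hab.le]; exact hu₁.continuousOn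
  have hcont'' : ContinuousOn (iteratedDerivWithin 2 u s) s :=
    hu.continuousOn_iteratedDerivWithin le_rfl hs
  let e := stdOrthonormalBasis ℝ F
  -- each coordinate of `u'` vanishes somewhere by Rolle, possibly at different points
  have hcoord : ∀ i, ∫ x in a..b, ⟪e i, derivWithin u s x⟫ ^ 2
      ≤ (b - a) ^ 2 / 2 * ∫ x in a..b, ⟪e i, iteratedDerivWithin 2 u s x⟫ ^ 2 := by
    intro i
    obtain ⟨ζ, hζ, hζ0⟩ := exists_mem_Ioo_clm_apply_eq_zero (innerSL ℝ (e i)) hab hu' huab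
    simpa using integral_sq_norm_le_of_eq_zero hab.le (Ioo_subset_Icc_self hζ) hζ0
      (fun x hx => (innerSL ℝ (e i)).hasFDerivAt.comp_hasDerivWithinAt x (hu'' x hx))
      ((innerSL ℝ (e i)).continuous.comp_continuousOn hcont'')
  rw [e.integral_sq_norm_eq_sum hcont', e.integral_sq_norm_eq_sum (by rwa [uIcc_of_le hab.le]),
    Finset.mul_sum]
  exact Finset.sum_le_sum fun i _ => hcoord i

end InnerProductSpace

theorem poincare_second_order (l : ℝ) (hl : 0 < l) (u : ℝ → ℂ)
    (hu : ContDiffOn ℝ 2 u (Set.Icc 0 l))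
    (h0 : u 0 = 0) (hl0 : u l = 0) :
    ∫ x in (0:ℝ)..l, ‖derivWithin u (Set.Icc 0 l) x‖ ^ 2
      ≤ l ^ 2 / 2 * ∫ x in (0:ℝ)..l, ‖iteratedDerivWithin 2 u (Set.Icc 0 l) x‖ ^ 2 := by
  simpa using integral_sq_norm_derivWithin_le hl hu (h0.trans hl0.symm)
end

section
/- Let l > 0 and l₀ ∈ (0, l) with l₀/l = p₁/p₂ for natural numbers p₁, p₂ ≥ 1, and assume 2p₁ ≠ p₂ (equivalently 2l₀ ≠ l). Define Φ₀ : ℝ → ℝ by Φ₀(μ) = 2·sin(μ(l−l₀))·sin(μl₀) − sin(μl). Then Φ₀ is periodic with period P = (2π/|2l₀ − l|) · |2p₁ − p₂| / gcd(p₂, 2p₁ − p₂), i.e. P > 0 and Φ₀(μ + P) = Φ₀(μ) for all μ ∈ ℝ. -/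
theorem frequency_function_periodic
    (l l₀ : ℝ) (hl : 0 < l) (hl₀ : 0 < l₀) (hll : l₀ < l)
    (p₁ p₂ : ℕ) (hp₁ : 1 ≤ p₁) (hp₂ : 1 ≤ p₂)
    (hrat : l₀ / l = (p₁ : ℝ) / (p₂ : ℝ))
    (hne : 2 * p₁ ≠ p₂)
    (Φ₀ : ℝ → ℝ)
    (hΦ₀ : ∀ μ, Φ₀ μ = 2 * Real.sin (μ * (l - l₀)) * Real.sin (μ * l₀) - Real.sin (μ * l))
    (P : ℝ)
    (hP : P = 2 * Real.pi / |2 * l₀ - l| * |2 * (p₁ : ℝ) - (p₂ : ℝ)| /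
      (Nat.gcd p₂ (2 * (p₁ : ℤ) - (p₂ : ℤ)).natAbs : ℝ)) :
    0 < P ∧ ∀ μ : ℝ, Φ₀ (μ + P) = Φ₀ μ := by
  set g : ℕ := Nat.gcd p₂ (2 * (p₁ : ℤ) - (p₂ : ℤ)).natAbs with hg
  have hp₂pos : (0:ℝ) < p₂ := by exact_mod_cast hp₂
  have hdne : (2 * (p₁ : ℤ) - (p₂ : ℤ)) ≠ 0 := by
    intro h
    apply hne
    have : 2 * (p₁:ℤ) = p₂ := by linarith
    exact_mod_cast this
  have hgpos : 0 < g := Nat.gcd_pos_of_pos_left _ hp₂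
  have hgposR : (0:ℝ) < g := by exact_mod_cast hgpos
  -- l₀ = l * p₁ / p₂
  have hl₀eq : l₀ * p₂ = l * p₁ := by
    have := (div_eq_div_iff hl.ne' hp₂pos.ne').mp hrat
    linarith [this]
  -- 2l₀ - l = l * (2p₁ - p₂) / p₂
  have hkey : (2 * l₀ - l) * p₂ = l * (2 * (p₁:ℝ) - p₂) := by ring_nf; nlinarith [hl₀eq]
  have habs : |2 * l₀ - l| * p₂ = l * |2 * (p₁:ℝ) - (p₂:ℝ)| := by
    have : |(2 * l₀ - l) * p₂| = |l * (2 * (p₁:ℝ) - p₂)| := by rw [hkey]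
    rwa [abs_mul, abs_mul, abs_of_pos hp₂pos, abs_of_pos hl] at this
  have hmne : |2 * (p₁ : ℝ) - (p₂ : ℝ)| ≠ 0 := by
    rw [abs_ne_zero]
    have h : ((2 * (p₁:ℤ) - p₂ : ℤ) : ℝ) ≠ 0 := Int.cast_ne_zero.mpr hdne
    push_cast at h
    exact h
  have hmpos : 0 < |2 * (p₁ : ℝ) - (p₂ : ℝ)| := (abs_nonneg _).lt_of_ne (Ne.symm hmne)
  have habspos : 0 < |2 * l₀ - l| := by nlinarith [abs_nonneg (2 * l₀ - l), mul_pos hl hmpos]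
  have habs' : |2 * l₀ - l| = l * |2 * (p₁:ℝ) - (p₂:ℝ)| / p₂ := by
    field_simp
    linarith [habs]
  -- P = 2π p₂ / (l g)
  have hPeq : P = 2 * Real.pi * p₂ / (l * g) := by
    rw [hP, habs']
    field_simp
  have hPpos : 0 < P := by
    rw [hPeq]
    positivity
  refine ⟨hPpos, fun μ => ?_⟩
  -- integer multiples
  obtain ⟨b, hb⟩ : (g:ℤ) ∣ (p₂:ℤ) := Int.natCast_dvd_natCast.mpr (Nat.gcd_dvd_left _ _)
  obtain ⟨a, ha⟩ : (g:ℤ) ∣ (2 * (p₁:ℤ) - p₂) := by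
    have := Nat.gcd_dvd_right p₂ (2 * (p₁ : ℤ) - (p₂ : ℤ)).natAbs
    exact (Int.natCast_dvd_natCast.mpr this).trans (Int.natAbs_dvd.mpr dvd_rfl)
  have hPl : P * l = b * (2 * Real.pi) := by
    rw [hPeq]
    have : (p₂:ℝ) = g * b := by exact_mod_cast hb
    field_simp
    rw [this]
  have hPl2 : P * (2 * l₀ - l) = a * (2 * Real.pi) := by
    have h2 : (2 * (p₁:ℝ) - p₂) = g * a := by exact_mod_cast ha
    have : P * ((2 * l₀ - l) * p₂) = a * (2 * Real.pi) * p₂ := by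
      rw [hkey, h2, hPeq]
      field_simp
    have := mul_right_cancel₀ hp₂pos.ne' (by linarith [this] : P * (2 * l₀ - l) * p₂ = a * (2 * Real.pi) * p₂)
    linarith
  -- product to sum
  have prod : ∀ x : ℝ, Φ₀ x = Real.cos (x * (l - 2 * l₀)) - Real.cos (x * l) - Real.sin (x * l) := by
    intro x
    have key : Real.cos (x*(l-2*l₀)) - Real.cos (x*l) = 2 * Real.sin (x*(l-l₀)) * Real.sin (x*l₀) := by
      rw [Real.cos_sub_cos]
      have h1 : (x*(l-2*l₀)+x*l)/2 = x*(l-l₀) := by ring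
      have h2 : (x*(l-2*l₀)-x*l)/2 = -(x*l₀) := by ring
      rw [h1, h2, Real.sin_neg]; ring
    rw [hΦ₀ x]; linarith [key]
  rw [prod, prod]
  have e1 : (μ + P) * (l - 2 * l₀) = μ * (l - 2*l₀) + ((-a : ℤ) : ℝ) * (2 * Real.pi) := by
    push_cast; linarith [hPl2]
  have e2 : (μ + P) * l = μ * l + b * (2 * Real.pi) := by linarith [hPl]
  rw [e1, e2, Real.cos_add_int_mul_two_pi, Real.cos_add_int_mul_two_pi, Real.sin_add_int_mul_two_pi]
end

section
/- Let P > 0, let k ≥ 1 be a natural number, let a₀, …, a_{k−1} ∈ [0, P), and define μ : ℕ → ℝ by μ_n = ⌊n/k⌋·P + a_{n mod k}. Then for all real y ≥ 0 and z > 0, the number of indices n ∈ ℕ with y ≤ μ_n² < y + z satisfies card{n ∈ ℕ : y ≤ μ_n² < y + z} ≤ (k/P)·(√(y+z) − √y + P) + 2. -/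
theorem counting_squared_roots_upper_bound
    (P : ℝ) (hP : 0 < P) (k : ℕ) (hk : 0 < k)
    (a : Fin k → ℝ) (haP : ∀ i, a i ∈ Set.Ico (0:ℝ) P)
    (μ : ℕ → ℝ)
    (hμ : ∀ n : ℕ, μ n = (n / k : ℕ) * P + a ⟨n % k, Nat.mod_lt n hk⟩)
    (y z : ℝ) (hy : 0 ≤ y) (hz : 0 < z) :
    {n : ℕ | y ≤ (μ n) ^ 2 ∧ (μ n) ^ 2 < y + z}.Finite ∧
    ({n : ℕ | y ≤ (μ n) ^ 2 ∧ (μ n) ^ 2 < y + z}.ncard : ℝ)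
      ≤ (k : ℝ) / P * (Real.sqrt (y + z) - Real.sqrt y + P) + 2 := by
  classical
  set s := Real.sqrt y with hs
  set t := Real.sqrt (y + z) with ht
  have hst : s ≤ t := Real.sqrt_le_sqrt (by linarith)
  have hs0 : 0 ≤ s := Real.sqrt_nonneg _
  have ht0 : 0 ≤ t := Real.sqrt_nonneg _
  have hμ0 : ∀ n, 0 ≤ μ n := by
    intro n
    rw [hμ]
    have h1 := (haP ⟨n % k, Nat.mod_lt n hk⟩).1
    positivity
  have hchar : ∀ n, (y ≤ μ n ^ 2 ∧ μ n ^ 2 < y + z) ↔ (s ≤ μ n ∧ μ n < t) := by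
    intro n
    constructor
    · rintro ⟨h1, h2⟩
      constructor
      · have := Real.sqrt_le_sqrt h1
        rwa [Real.sqrt_sq (hμ0 n)] at this
      · have := Real.sqrt_lt_sqrt (sq_nonneg _) h2
        rwa [Real.sqrt_sq (hμ0 n)] at this
    · rintro ⟨h1, h2⟩
      constructor
      · have h3 : s ^ 2 ≤ μ n ^ 2 := by nlinarith
        rwa [Real.sq_sqrt hy] at h3
      · have h3 : μ n ^ 2 < t ^ 2 := by nlinarith [hμ0 n]
        rwa [Real.sq_sqrt (by linarith : (0:ℝ) ≤ y + z)] at h3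
  set m := ⌊(t - s) / P⌋₊ with hm
  set N := k * (⌊t / P⌋₊ + 1) with hN
  have hlow : ∀ n : ℕ, ((n / k : ℕ) : ℝ) * P ≤ μ n := by
    intro n
    rw [hμ]
    have := (haP ⟨n % k, Nat.mod_lt n hk⟩).1
    linarith
  have hbdd : ∀ n : ℕ, μ n < t → n < N := by
    intro n h2
    have hq : ((n / k : ℕ) : ℝ) * P < t := lt_of_le_of_lt (hlow n) h2
    have h3 : ((n / k : ℕ) : ℝ) < t / P := by
      rw [lt_div_iff₀ hP]; exact hq
    have h4 : t / P < (⌊t / P⌋₊ : ℝ) + 1 := Nat.lt_floor_add_one _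
    have h5 : n / k < ⌊t / P⌋₊ + 1 := by
      have h5' : ((n / k : ℕ) : ℝ) < (⌊t / P⌋₊ : ℝ) + 1 := lt_trans h3 h4
      exact_mod_cast h5'
    have h6 := Nat.div_add_mod n k
    have h7 := Nat.mod_lt n hk
    rw [hN]
    calc n = k * (n / k) + n % k := (Nat.div_add_mod n k).symm
    _ < k * (n / k) + k := by omega
    _ = k * (n / k + 1) := by ring
    _ ≤ k * (⌊t / P⌋₊ + 1) := Nat.mul_le_mul_left k h5
  set F := (Finset.range N).filter (fun n => s ≤ μ n ∧ μ n < t) with hF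
  have hSF : {n : ℕ | y ≤ (μ n) ^ 2 ∧ (μ n) ^ 2 < y + z} = ↑F := by
    ext n
    simp only [Set.mem_setOf_eq, hF, Finset.coe_filter, Finset.mem_range, Set.mem_setOf_eq]
    rw [hchar n]
    constructor
    · intro h; exact ⟨hbdd n h.2, h⟩
    · intro h; exact h.2
  refine ⟨hSF ▸ F.finite_toSet, ?_⟩
  rw [hSF, Set.ncard_coe_finset]
  -- fiberwise count
  have hfiber : ∀ r ∈ Finset.range k, (F.filter (fun n => n % k = r)).card ≤ m + 1 := by
    intro r _
    set G := F.filter (fun n => n % k = r) with hG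
    rcases G.eq_empty_or_nonempty with h | h
    · simp [h]
    · have hsub : G ⊆ (Finset.range (m + 1)).image (fun j => G.min' h + j * k) := by
        intro n hn
        set n₀ := G.min' h with hn₀
        have hn₀G : n₀ ∈ G := G.min'_mem h
        have hle : n₀ ≤ n := G.min'_le n hn
        obtain ⟨hnF, hnr⟩ := Finset.mem_filter.mp hn
        obtain ⟨hn₀F, hn₀r⟩ := Finset.mem_filter.mp hn₀G
        obtain ⟨_, hsn, hnt⟩ : n ∈ Finset.range N ∧ s ≤ μ n ∧ μ n < t := by
          have := Finset.mem_filter.mp hnF; exact ⟨this.1, this.2⟩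
        obtain ⟨_, hsn₀, hn₀t⟩ : n₀ ∈ Finset.range N ∧ s ≤ μ n₀ ∧ μ n₀ < t := by
          have := Finset.mem_filter.mp hn₀F; exact ⟨this.1, this.2⟩
        have hqle : n₀ / k ≤ n / k := Nat.div_le_div_right hle
        set d := n / k - n₀ / k with hd
        have hmul : (n₀ / k) * k ≤ (n / k) * k := Nat.mul_le_mul_right k hqle
        have hsubmul : d * k = (n / k) * k - (n₀ / k) * k := Nat.sub_mul _ _ _
        have c1 : (n / k) * k = k * (n / k) := Nat.mul_comm _ _
        have c2 : (n₀ / k) * k = k * (n₀ / k) := Nat.mul_comm _ _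
        have e1 := Nat.div_add_mod n k
        have e2 := Nat.div_add_mod n₀ k
        have hnd : n = n₀ + d * k := by omega
        have hafin : (⟨n % k, Nat.mod_lt n hk⟩ : Fin k) = ⟨n₀ % k, Nat.mod_lt n₀ hk⟩ := by
          simp only [Fin.mk.injEq]; omega
        have hμdiff : μ n - μ n₀ = (d : ℝ) * P := by
          rw [hμ n, hμ n₀, hafin, Nat.cast_sub hqle]
          ring
        have hdP : (d : ℝ) * P < t - s := by
          rw [← hμdiff]; linarith
        have hdle : (d : ℝ) ≤ (t - s) / P := by
          rw [le_div_iff₀ hP]; linarith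
        have hdm : d ≤ m := Nat.le_floor hdle
        exact Finset.mem_image.mpr ⟨d, Finset.mem_range.mpr (by omega), hnd.symm⟩
      calc G.card ≤ _ := Finset.card_le_card hsub
        _ ≤ (Finset.range (m + 1)).card := Finset.card_image_le
        _ = m + 1 := Finset.card_range _
  have hcard : F.card ≤ k * (m + 1) := by
    rw [Finset.card_eq_sum_card_fiberwise (f := fun n => n % k) (t := Finset.range k)
      (fun x _ => Finset.mem_range.mpr (Nat.mod_lt x hk))]
    calc ∑ r ∈ Finset.range k, (F.filter (fun n => n % k = r)).card
        ≤ ∑ _r ∈ Finset.range k, (m + 1) := Finset.sum_le_sum hfiber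
      _ = k * (m + 1) := by simp [Finset.sum_const, Finset.card_range, smul_eq_mul]
  have hm_le : (m : ℝ) ≤ (t - s) / P := Nat.floor_le (div_nonneg (by linarith) hP.le)
  have : (F.card : ℝ) ≤ (k : ℝ) * ((m : ℝ) + 1) := by exact_mod_cast Nat.cast_le.mpr hcard
  have hk0 : (0:ℝ) ≤ k := Nat.cast_nonneg k
  have : (F.card : ℝ) ≤ (k : ℝ) * ((t - s) / P + 1) := by nlinarith
  have heq : (k : ℝ) * ((t - s) / P + 1) = (k : ℝ) / P * (t - s + P) := by
    field_simp
  linarith [heq ▸ this]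
end

section
/- Let l > 0, l₀ ∈ (0, l) with l₀/l rational, and let E, I, ρ > 0. Define Φ₀ : ℝ → ℝ by Φ₀(μ) = 2·sin(μ(l−l₀))·sin(μl₀) − sin(μl). Let μ : ℕ → ℝ be a strictly increasing function whose range is exactly the set {x ∈ [0, ∞) : Φ₀(x) = 0}, and assume all these roots are simple, i.e. the derivative Φ₀′(μ_j) ≠ 0 for every j. Set λ_j = i·√(EI/ρ)·μ_j² ∈ ℂ. Then there exists τ > 0 such that the system of functions {t ↦ exp(λ_j t)}_{j∈ℕ} is minimal in L²((0, τ), ℂ): for every j ∈ ℕ, the equivalence class of t ↦ exp(λ_j t) in L²((0, τ), ℂ) does not belong to the closure of the linear span of the equivalence classes of {t ↦ exp(λ_i t) : i ∈ ℕ, i ≠ j}. -/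
/-!
Since `l₀ / l` is rational, `Φ₀` is periodic, so its nonnegative zeros repeat with that period
and consecutive roots `μ j` are separated by a uniform gap `δ > 0`. Then the frequencies
`ω j = √(EI/ρ) μ j²` satisfy `|ω n - ω m| ≥ A (n - m)²` with `A > 0`. In `L²(0, τ)` the Gram matrix
of `e j = (t ↦ exp (i ω j t))` has diagonal `τ` and off-diagonal entries at most
`2 / |ω n - ω m|`, whose row sums are bounded by `(2 / A) ∑_{k ∈ ℤ} 1 / k²`. By Schur's test, once
`τ` exceeds this bound by `1` we get `‖∑ d j • e j‖² ≥ ∑ |d j|²`, which keeps each `e j` at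
distance `≥ 1` from the span of the others.
-/

open MeasureTheory Finset
open scoped ComplexConjugate InnerProductSpace Real

theorem Finset.sum_sum_mul_mul_le_of_rowSum_le {ι : Type*} (s : Finset ι) (x : ι → ℝ)
    (K : ι → ι → ℝ) {S : ℝ} (hK₀ : ∀ i j, 0 ≤ K i j) (hK : ∀ i j, K i j = K j i)
    (hrow : ∀ i ∈ s, ∑ j ∈ s, K i j ≤ S) :
    ∑ i ∈ s, ∑ j ∈ s, x i * x j * K i j ≤ S * ∑ i ∈ s, x i ^ 2 := by
  calc ∑ i ∈ s, ∑ j ∈ s, x i * x j * K i j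
      ≤ ∑ i ∈ s, ∑ j ∈ s, (x i ^ 2 * K i j + x j ^ 2 * K j i) / 2 := by
        gcongr with i _ j _
        rw [hK j i]
        nlinarith [sq_nonneg (x i - x j), hK₀ i j]
    _ = ∑ i ∈ s, x i ^ 2 * ∑ j ∈ s, K i j := by
        simp only [← Finset.sum_div, Finset.sum_add_distrib, Finset.mul_sum]
        rw [Finset.sum_comm (f := fun i j => x j ^ 2 * K j i)]
        ring
    _ ≤ ∑ i ∈ s, x i ^ 2 * S := by
        gcongr with i hi
        exact hrow i hi
    _ = S * ∑ i ∈ s, x i ^ 2 := by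
        rw [Finset.mul_sum]
        simp_rw [mul_comm]

section Gram

variable {𝕜 H ι : Type*} [RCLike 𝕜] [NormedAddCommGroup H] [InnerProductSpace 𝕜 H]

theorem norm_sum_smul_sq_eq (v : ι → H) (s : Finset ι) (d : ι → 𝕜) :
    ‖∑ i ∈ s, d i • v i‖ ^ 2 = ∑ i ∈ s, ∑ j ∈ s, RCLike.re (conj (d i) * d j * ⟪v i, v j⟫_𝕜) := by
  rw [@norm_sq_eq_re_inner 𝕜, sum_inner, map_sum]
  refine Finset.sum_congr rfl fun i _ => ?_
  rw [inner_smul_left, inner_sum, Finset.mul_sum, map_sum]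
  simp_rw [inner_smul_right, mul_assoc]

theorem mul_sum_norm_sq_le_norm_sum_smul_sq (v : ι → H) (K : ι → ι → ℝ) {τ S : ℝ}
    (hdiag : ∀ i, τ ≤ ‖v i‖ ^ 2) (hoff : ∀ i j, i ≠ j → ‖⟪v i, v j⟫_𝕜‖ ≤ K i j)
    (hK₀ : ∀ i j, 0 ≤ K i j) (hK : ∀ i j, K i j = K j i) (s : Finset ι)
    (hrow : ∀ i ∈ s, ∑ j ∈ s, K i j ≤ S) (d : ι → 𝕜) :
    (τ - S) * ∑ i ∈ s, ‖d i‖ ^ 2 ≤ ‖∑ i ∈ s, d i • v i‖ ^ 2 := by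
  classical
  have hentry : ∀ i j, (if i = j then ‖d i‖ ^ 2 * τ else 0) - ‖d i‖ * ‖d j‖ * K i j
      ≤ RCLike.re (conj (d i) * d j * ⟪v i, v j⟫_𝕜) := by
    intro i j
    split_ifs with hij
    · subst hij
      rw [RCLike.conj_mul, inner_self_eq_norm_sq_to_K, ← RCLike.ofReal_pow, ← RCLike.ofReal_pow,
        ← RCLike.ofReal_mul, RCLike.ofReal_re]
      have hτ := mul_le_mul_of_nonneg_left (hdiag i) (sq_nonneg ‖d i‖)
      have hKii := mul_nonneg (mul_self_nonneg ‖d i‖) (hK₀ i i)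
      linarith
    · have hre := neg_abs_le (RCLike.re (conj (d i) * d j * ⟪v i, v j⟫_𝕜))
      have habs := RCLike.abs_re_le_norm (conj (d i) * d j * ⟪v i, v j⟫_𝕜)
      rw [norm_mul, norm_mul, RCLike.norm_conj] at habs
      have hK := mul_le_mul_of_nonneg_left (hoff i j hij)
        (mul_nonneg (norm_nonneg (d i)) (norm_nonneg (d j)))
      linarith
  have hschur := Finset.sum_sum_mul_mul_le_of_rowSum_le s (fun i => ‖d i‖) K hK₀ hK hrow
  calc (τ - S) * ∑ i ∈ s, ‖d i‖ ^ 2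
      ≤ ∑ i ∈ s, ∑ j ∈ s, ((if i = j then ‖d i‖ ^ 2 * τ else 0) - ‖d i‖ * ‖d j‖ * K i j) := by
        simp only [Finset.sum_sub_distrib, Finset.sum_ite_eq]
        rw [Finset.sum_congr rfl fun i hi => if_pos hi, ← Finset.sum_mul]
        linarith
    _ ≤ ‖∑ i ∈ s, d i • v i‖ ^ 2 := by
        rw [norm_sum_smul_sq_eq]
        gcongr with i _ j _
        exact hentry i j

end Gram

theorem notMem_closure_span_image_compl_of_mul_sum_le {𝕜 E ι : Type*} [NormedField 𝕜]
    [SeminormedAddCommGroup E] [NormedSpace 𝕜 E] (v : ι → E) {a : ℝ} (ha : 0 < a)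
    (hv : ∀ (s : Finset ι) (d : ι → 𝕜), a * ∑ i ∈ s, ‖d i‖ ^ 2 ≤ ‖∑ i ∈ s, d i • v i‖ ^ 2)
    (j : ι) : v j ∉ closure (Submodule.span 𝕜 (v '' {j}ᶜ) : Set E) := by
  classical
  have hspan : (Submodule.span 𝕜 (v '' {j}ᶜ) : Set E) ⊆ {b | a ≤ ‖v j - b‖ ^ 2} := by
    intro b hb
    obtain ⟨c, hc, rfl⟩ := (Finsupp.mem_span_image_iff_linearCombination 𝕜).1 hb
    have hcj : c j = 0 := (Finsupp.mem_supported' 𝕜 c).1 hc j (by simp)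
    set s := insert j c.support
    set d : ι → 𝕜 := Pi.single j 1 - ⇑c
    have hsum : v j - Finsupp.linearCombination 𝕜 v c = ∑ i ∈ s, d i • v i := by
      rw [Finsupp.linearCombination_apply_of_mem_supported 𝕜
        (s := s) ((Finsupp.mem_supported 𝕜 c).2 (Finset.coe_subset.2 (Finset.subset_insert _ _)))]
      simp [d, sub_smul, Finset.sum_sub_distrib, Pi.single_apply, s]
    have hdj : ‖d j‖ ^ 2 ≤ ∑ i ∈ s, ‖d i‖ ^ 2 :=
      Finset.single_le_sum (f := fun i => ‖d i‖ ^ 2) (fun _ _ => by positivity)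
        (Finset.mem_insert_self _ _)
    have hdj1 : d j = 1 := by simp [d, hcj]
    rw [hdj1, norm_one, one_pow] at hdj
    rw [Set.mem_ofPred_eq, hsum]
    exact (le_mul_of_one_le_right ha.le hdj).trans (hv s d)
  have hclosed : IsClosed {b : E | a ≤ ‖v j - b‖ ^ 2} := isClosed_le continuous_const (by fun_prop)
  intro hj
  simpa using (closure_minimal hspan hclosed hj).trans_lt' ha

section Exponentials

open Complex Set

theorem inner_eq_integral_exp_I_mul {μ : Measure ℝ} {a b : ℝ} {f g : Lp ℂ 2 μ}
    (hf : f =ᵐ[μ] fun t => exp (I * a * t)) (hg : g =ᵐ[μ] fun t => exp (I * b * t)) :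
    ⟪f, g⟫_ℂ = ∫ t, exp (I * ↑(b - a) * t) ∂μ := by
  rw [L2.inner_def]
  refine integral_congr_ae ?_
  filter_upwards [hf, hg] with t hft hgt
  rw [RCLike.inner_apply, hft, hgt, ← exp_conj, ← exp_add]
  congr 1
  simp only [map_mul, conj_I, conj_ofReal]
  push_cast
  ring

theorem norm_sq_eq_of_ae_eq_exp_I_mul {τ a : ℝ} (hτ : 0 ≤ τ)
    {f : Lp ℂ 2 (volume.restrict (Ioo 0 τ))}
    (hf : f =ᵐ[volume.restrict (Ioo 0 τ)] fun t => exp (I * a * t)) : ‖f‖ ^ 2 = τ := by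
  rw [@norm_sq_eq_re_inner ℂ, inner_eq_integral_exp_I_mul hf hf]
  simp [Measure.real, hτ]

theorem norm_setIntegral_Ioo_exp_I_mul_le {τ a : ℝ} (hτ : 0 ≤ τ) (ha : a ≠ 0) :
    ‖∫ t in Ioo 0 τ, exp (I * a * t)‖ ≤ 2 / |a| := by
  have hIa : I * a ≠ 0 := mul_ne_zero I_ne_zero (ofReal_ne_zero.2 ha)
  rw [← integral_Ioc_eq_integral_Ioo, ← intervalIntegral.integral_of_le hτ,
    integral_exp_mul_complex hIa, norm_div, norm_mul, norm_I, one_mul, norm_real, Real.norm_eq_abs]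
  gcongr
  calc _ ≤ ‖exp (I * a * τ)‖ + ‖exp (I * a * (0 : ℝ))‖ := norm_sub_le _ _
    _ = 2 := by
      simp only [norm_exp]
      norm_num

-- The term `m = n` is `1 / 0 ^ 2 = 0`.
theorem sum_one_div_sub_sq_le_tsum (F : Finset ℕ) (n : ℕ) :
    ∑ m ∈ F, 1 / ((m : ℝ) - n) ^ 2 ≤ ∑' k : ℤ, 1 / (k : ℝ) ^ 2 := by
  have hinj : InjOn (fun m : ℕ => (m : ℤ) - n) F := fun a _ b _ h => by
    simpa using h
  calc ∑ m ∈ F, 1 / ((m : ℝ) - n) ^ 2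
        = ∑ k ∈ F.image (fun m : ℕ => (m : ℤ) - n), 1 / (k : ℝ) ^ 2 := by
        rw [Finset.sum_image hinj]
        push_cast
        rfl
    _ ≤ _ := (Real.summable_one_div_int_pow.2 one_lt_two).sum_le_tsum _ fun _ _ => by positivity

theorem exists_exp_I_mul_minimal_of_mul_sq_le_abs_sub {ω : ℕ → ℝ} {A : ℝ} (hA : 0 < A)
    (hω : ∀ m n : ℕ, A * ((n : ℝ) - m) ^ 2 ≤ |ω n - ω m|) :
    ∃ τ > (0 : ℝ), ∀ g : ℕ → Lp ℂ 2 (volume.restrict (Ioo (0 : ℝ) τ)),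
      (∀ j, (g j : ℝ → ℂ) =ᵐ[volume.restrict (Ioo (0 : ℝ) τ)] fun t => exp (I * ω j * t)) →
      ∀ j, g j ∉ closure (Submodule.span ℂ (g '' {j}ᶜ) : Set _) := by
  set C := ∑' k : ℤ, 1 / (k : ℝ) ^ 2
  set K : ℕ → ℕ → ℝ := fun m n => 2 / A * (1 / ((n : ℝ) - m) ^ 2)
  have hC : 0 ≤ C := tsum_nonneg fun _ => by positivity
  refine ⟨2 / A * C + 1, by positivity, fun g hg j => ?_⟩
  refine notMem_closure_span_image_compl_of_mul_sum_le g one_pos (fun s d => ?_) j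
  have hnorm (i : ℕ) : 2 / A * C + 1 ≤ ‖g i‖ ^ 2 :=
    (norm_sq_eq_of_ae_eq_exp_I_mul (by positivity) (hg i)).ge
  have hoff (m n : ℕ) (hmn : m ≠ n) : ‖⟪g m, g n⟫_ℂ‖ ≤ K m n := by
    have hpos : 0 < A * ((n : ℝ) - m) ^ 2 := by
      have : (n : ℝ) - m ≠ 0 := sub_ne_zero.2 (by exact_mod_cast hmn.symm)
      positivity
    rw [inner_eq_integral_exp_I_mul (hg m) (hg n)]
    calc _ ≤ 2 / |ω n - ω m| :=
          norm_setIntegral_Ioo_exp_I_mul_le (by positivity) (abs_pos.1 (hpos.trans_le (hω m n)))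
      _ ≤ 2 / (A * ((n : ℝ) - m) ^ 2) := by gcongr; exact hω m n
      _ = K m n := by simp only [K]; field_simp
  have hrow (m : ℕ) : ∑ n ∈ s, K m n ≤ 2 / A * C := by
    rw [← Finset.mul_sum]
    gcongr
    exact sum_one_div_sub_sq_le_tsum s m
  simpa using mul_sum_norm_sq_le_norm_sum_smul_sq g K hnorm hoff (fun _ _ => by positivity)
    (fun m n => by simp only [K]; ring) s (fun m _ => hrow m) d

end Exponentials

section Periodic

open Function Real

theorem periodic_sin_mul_of_mul_eq_int_mul_two_pi {a T : ℝ} {k : ℤ} (h : T * a = k * (2 * π)) :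
    Periodic (fun x => sin (x * a)) T := fun x => by
  simp only [add_mul, h, sin_add_int_mul_two_pi]

theorem periodic_two_mul_sin_mul_sin_sub_sin {l l₀ : ℝ} {q : ℚ} (hl : l ≠ 0) (hq : l₀ / l = q) :
    Periodic (fun x => 2 * sin (x * (l - l₀)) * sin (x * l₀) - sin (x * l))
      (2 * π * q.den / l) := by
  have hl' : 2 * π * q.den / l * l = (q.den : ℤ) * (2 * π) := by
    push_cast; field_simp
  have hl₀ : 2 * π * q.den / l * l₀ = q.num * (2 * π) := by
    rw [show 2 * π * q.den / l * l₀ = 2 * π * (q * q.den) by rw [← hq]; field_simp]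
    rw [← Rat.cast_natCast, ← Rat.cast_mul, Rat.mul_den_eq_num, Rat.cast_intCast]; ring
  have hll₀ : 2 * π * q.den / l * (l - l₀) = ((q.den : ℤ) - q.num : ℤ) * (2 * π) := by
    rw [mul_sub, hl', hl₀]; push_cast; ring
  intro x
  simp only [periodic_sin_mul_of_mul_eq_int_mul_two_pi hll₀ x,
    periodic_sin_mul_of_mul_eq_int_mul_two_pi hl₀ x,
    periodic_sin_mul_of_mul_eq_int_mul_two_pi hl' x]

end Periodic

section ZerosOfPeriodic

open Set Function

theorem StrictMono.exists_add_eq_add_of_range_eq_zeros {f : ℝ → ℝ} {T : ℝ} (hT : 0 < T)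
    (hf : Periodic f T) {μ : ℕ → ℝ} (hμ : StrictMono μ)
    (hrange : range μ = {x | 0 ≤ x ∧ f x = 0}) : ∃ N, 0 < N ∧ ∀ n, μ (n + N) = μ n + T := by
  have hmem (y : ℝ) : y ∈ range μ ↔ 0 ≤ y ∧ f y = 0 := by rw [hrange]; rfl
  have hμ₀ (n : ℕ) : 0 ≤ μ n := ((hmem _).1 (mem_range_self n)).1
  have hzero (n : ℕ) : f (μ n) = 0 := ((hmem _).1 (mem_range_self n)).2
  obtain ⟨N, hN⟩ := (hmem (μ 0 + T)).2 ⟨by linarith [hμ₀ 0], by rw [hf, hzero]⟩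
  have hNpos : 0 < N := hμ.lt_iff_lt.1 (by linarith)
  refine ⟨N, hNpos, congrFun ((StrictMono.range_inj (fun a b h => hμ (by omega))
    (fun a b h => by simpa using hμ h)).1 ?_)⟩
  ext y
  constructor
  · rintro ⟨n, rfl⟩
    have hle : μ N ≤ μ (n + N) := hμ.monotone (by omega)
    obtain ⟨k, hk⟩ := (hmem (μ (n + N) - T)).2
      ⟨by linarith [hμ₀ 0], by rw [hf.sub_eq, hzero]⟩
    exact ⟨k, by simp [hk]⟩
  · rintro ⟨n, rfl⟩
    obtain ⟨k, hk⟩ := (hmem (μ n + T)).2 ⟨by linarith [hμ₀ n], by rw [hf, hzero]⟩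
    have hNk : N ≤ k := hμ.le_iff_le.1 (by rw [hk, hN]; linarith [hμ.monotone (Nat.zero_le n)])
    exact ⟨k - N, by simp [Nat.sub_add_cancel hNk, hk]⟩

theorem StrictMono.exists_pos_le_sub_succ_of_add_eq_add {μ : ℕ → ℝ} (hμ : StrictMono μ) {N : ℕ}
    (hN : 0 < N) {T : ℝ} (hshift : ∀ n, μ (n + N) = μ n + T) :
    ∃ δ > 0, ∀ n, δ ≤ μ (n + 1) - μ n := by
  have hgap : Periodic (fun n => μ (n + 1) - μ n) N := fun n => by
    simp only [add_right_comm n N 1, hshift]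
    ring
  refine ⟨(Finset.range N).inf' (Finset.nonempty_range_iff.2 hN.ne') fun n => μ (n + 1) - μ n,
    ?_, fun n => ?_⟩
  · exact (Finset.lt_inf'_iff _).2 fun n _ => sub_pos.2 (hμ n.lt_succ_self)
  · rw [← hgap.map_mod_nat n]
    exact Finset.inf'_le _ (Finset.mem_range.2 (Nat.mod_lt n hN))

theorem mul_abs_sub_le_abs_sub_of_le_sub_succ {μ : ℕ → ℝ} {δ : ℝ}
    (h : ∀ n, δ ≤ μ (n + 1) - μ n) (m n : ℕ) : δ * |(n : ℝ) - m| ≤ |μ n - μ m| := by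
  have hle {m n : ℕ} (hmn : m ≤ n) : δ * ((n : ℝ) - m) ≤ μ n - μ m := by
    induction n, hmn using Nat.le_induction with
    | base => simp
    | succ n _ ih => push_cast; linarith [h n]
  rcases le_total m n with hmn | hnm
  · rw [abs_of_nonneg (sub_nonneg.2 (by exact_mod_cast hmn))]
    exact (hle hmn).trans (le_abs_self _)
  · rw [abs_sub_comm, abs_of_nonneg (sub_nonneg.2 (by exact_mod_cast hnm)), abs_sub_comm]
    exact (hle hnm).trans (le_abs_self _)

end ZerosOfPeriodic

theorem sq_sub_le_abs_sq_sub_sq {x y : ℝ} (hx : 0 ≤ x) (hy : 0 ≤ y) :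
    (x - y) ^ 2 ≤ |x ^ 2 - y ^ 2| := by
  calc (x - y) ^ 2 = |x - y| * |x - y| := by rw [abs_mul_abs_self, sq]
    _ ≤ |x - y| * (x + y) := by
        gcongr
        exact abs_sub_le_iff.2 ⟨by linarith, by linarith⟩
    _ = |x ^ 2 - y ^ 2| := by
        rw [show x ^ 2 - y ^ 2 = (x - y) * (x + y) by ring, abs_mul,
          abs_of_nonneg (add_nonneg hx hy)]

theorem exponential_system_minimal_in_L2_general
    (l l₀ : ℝ) (hl : 0 < l)
    (hrat : ∃ q : ℚ, l₀ / l = (q : ℝ))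
    (E I ρ : ℝ) (hE : 0 < E) (hI : 0 < I) (hρ : 0 < ρ)
    (Φ₀ : ℝ → ℝ)
    (hΦ₀ : ∀ μ, Φ₀ μ = 2 * Real.sin (μ * (l - l₀)) * Real.sin (μ * l₀) - Real.sin (μ * l))
    (μ : ℕ → ℝ) (hmono : StrictMono μ)
    (hrange : Set.range μ = {x : ℝ | 0 ≤ x ∧ Φ₀ x = 0})
    (lam : ℕ → ℂ)
    (hlam : ∀ j : ℕ, lam j = Complex.I * (Real.sqrt (E * I / ρ) : ℝ) * ((μ j : ℝ) ^ 2 : ℝ)) :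
    ∃ τ > (0:ℝ), ∀ g : ℕ → Lp ℂ 2 (volume.restrict (Set.Ioo (0:ℝ) τ)),
      (∀ j : ℕ, (g j : ℝ → ℂ) =ᵐ[volume.restrict (Set.Ioo (0:ℝ) τ)]
          fun t : ℝ => Complex.exp (lam j * (t : ℂ))) →
      ∀ j : ℕ, (g j) ∉
        closure ((Submodule.span ℂ {v : Lp ℂ 2 (volume.restrict (Set.Ioo (0:ℝ) τ)) |
          ∃ i : ℕ, i ≠ j ∧ v = g i} : Submodule ℂ _) : Set _) := by
  obtain ⟨q, hq⟩ := hrat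
  have hper : Function.Periodic Φ₀ (2 * π * q.den / l) := by
    rw [funext hΦ₀]
    exact periodic_two_mul_sin_mul_sin_sub_sin hl.ne' hq
  obtain ⟨N, hN, hshift⟩ := hmono.exists_add_eq_add_of_range_eq_zeros (by positivity) hper hrange
  obtain ⟨δ, hδ, hgap⟩ := hmono.exists_pos_le_sub_succ_of_add_eq_add hN hshift
  have hμ₀ (n : ℕ) : 0 ≤ μ n := (hrange.subset (Set.mem_range_self n)).1
  set c := √(E * I / ρ)
  have hc : 0 < c := Real.sqrt_pos.2 (by positivity)
  have hsep (m n : ℕ) : c * δ ^ 2 * ((n : ℝ) - m) ^ 2 ≤ |c * μ n ^ 2 - c * μ m ^ 2| :=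
    calc c * δ ^ 2 * ((n : ℝ) - m) ^ 2 = c * (δ * |(n : ℝ) - m|) ^ 2 := by
          rw [mul_pow, sq_abs]; ring
      _ ≤ c * |μ n - μ m| ^ 2 := by gcongr; exact mul_abs_sub_le_abs_sub_of_le_sub_succ hgap m n
      _ ≤ c * |μ n ^ 2 - μ m ^ 2| := by
          rw [sq_abs]; gcongr; exact sq_sub_le_abs_sq_sub_sq (hμ₀ n) (hμ₀ m)
      _ = |c * μ n ^ 2 - c * μ m ^ 2| := by rw [← mul_sub, abs_mul, abs_of_pos hc]
  obtain ⟨τ, hτ, hmin⟩ := exists_exp_I_mul_minimal_of_mul_sq_le_abs_sub (by positivity) hsep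
  refine ⟨τ, hτ, fun g hg j => ?_⟩
  have hset : {v | ∃ i, i ≠ j ∧ v = g i} = g '' {j}ᶜ := by ext; simp [eq_comm]
  rw [hset]
  refine hmin g (fun i => (hg i).trans (.of_eq (funext fun t => ?_))) j
  rw [hlam]
  push_cast
  congr 1
  ring

theorem exponential_system_minimal_in_L2
    (l l₀ : ℝ) (hl : 0 < l) (hl₀ : 0 < l₀) (hll : l₀ < l)
    (hrat : ∃ q : ℚ, l₀ / l = (q : ℝ))
    (E I ρ : ℝ) (hE : 0 < E) (hI : 0 < I) (hρ : 0 < ρ)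
    (Φ₀ : ℝ → ℝ)
    (hΦ₀ : ∀ μ, Φ₀ μ = 2 * Real.sin (μ * (l - l₀)) * Real.sin (μ * l₀) - Real.sin (μ * l))
    (μ : ℕ → ℝ) (hmono : StrictMono μ)
    (hrange : Set.range μ = {x : ℝ | 0 ≤ x ∧ Φ₀ x = 0})
    (hsimple : ∀ j : ℕ, deriv Φ₀ (μ j) ≠ 0)
    (lam : ℕ → ℂ)
    (hlam : ∀ j : ℕ, lam j = Complex.I * (Real.sqrt (E * I / ρ) : ℝ) * ((μ j : ℝ) ^ 2 : ℝ)) :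
    ∃ τ > (0:ℝ), ∀ g : ℕ → Lp ℂ 2 (volume.restrict (Set.Ioo (0:ℝ) τ)),
      (∀ j : ℕ, (g j : ℝ → ℂ) =ᵐ[volume.restrict (Set.Ioo (0:ℝ) τ)]
          fun t : ℝ => Complex.exp (lam j * (t : ℂ))) →
      ∀ j : ℕ, (g j) ∉
        closure ((Submodule.span ℂ {v : Lp ℂ 2 (volume.restrict (Set.Ioo (0:ℝ) τ)) |
          ∃ i : ℕ, i ≠ j ∧ v = g i} : Submodule ℂ _) : Set _) :=
  exponential_system_minimal_in_L2_general l l₀ hl hrat E I ρ hE hI hρ Φ₀ hΦ₀ μ hmono hrange lam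
    hlam
end
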